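/- Let τ be a one-layer single-head transformer with embedding dimension d: τ(X)_{:,l} = MLP(Att(X_{:,l}, X) + X_{:,l}), where Att is single-head self-attention and MLP(x) = W_2 ReLU(W_1 x + b_1) + b_2 + x with c := ‖W_1‖₂·‖W_2‖₂ < 1. Let x_0, x_1, x_2 ∈ ℝ^d and set a_i = Att(x_0, [x_i, x_0]) for i ∈ {1,2}. Let y'_1, y'_2 ∈ ℝ^d be nonzero, orthogonal to each other, and orthogonal to both a_1 and a_2; set y_i = MLP(y'_i + x_0) and r = min(‖y'_1‖₂, ‖y'_2‖₂). Then for every m_p ∈ ℕ and every P ∈ ℝ^{d×m_p} there exists i ∈ {1,2} such that ‖τ([P, x_i, x_0])_{:,−1} − y_i‖₂ ≥ (1 − c)·r/2, where τ(·)_{:,−1} denotes the last column of the output. -/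

import Mathlib

/-- Softmax of a real vector. -/
noncomputable def softmax {n : ℕ} (z : Fin n → ℝ) : Fin n → ℝ :=
  fun j => Real.exp (z j) / ∑ l, Real.exp (z l)

/-- The attention of a query `x` within a context `X` for a single head
with matrices `WQ, WK, WV, WO`. -/
noncomputable def headAtt {s s' d m : ℕ}
    (WQ WK : Matrix (Fin s) (Fin d) ℝ) (WV : Matrix (Fin s') (Fin d) ℝ)
    (WO : Matrix (Fin d) (Fin s') ℝ)
    (x : Fin d → ℝ) (X : Matrix (Fin d) (Fin m) ℝ) : Fin d → ℝ :=
  ∑ j, softmax (fun j' => dotProduct (WK.mulVec fun i => X i j') (WQ.mulVec x)) j •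
    WO.mulVec (WV.mulVec fun i => X i j)

/-- The MLP layer `x ↦ W₂ ReLU(W₁ x + b₁) + b₂ + x` (with residual connection). -/
noncomputable def mlp {d dff : ℕ} (W1 : Matrix (Fin dff) (Fin d) ℝ)
    (W2 : Matrix (Fin d) (Fin dff) ℝ) (b1 : Fin dff → ℝ) (b2 : Fin d → ℝ)
    (x : Fin d → ℝ) : Fin d → ℝ :=
  W2.mulVec (fun i => max (W1.mulVec x i + b1 i) 0) + b2 + x

/-- One-layer `h`-head transformer: `τ(X)_{:,l} = MLP(Att(X_{:,l}, X) + X_{:,l})`. -/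
noncomputable def tf {h s s' d dff n : ℕ}
    (WQ WK : Fin h → Matrix (Fin s) (Fin d) ℝ)
    (WV : Fin h → Matrix (Fin s') (Fin d) ℝ)
    (WO : Fin h → Matrix (Fin d) (Fin s') ℝ)
    (W1 : Matrix (Fin dff) (Fin d) ℝ) (W2 : Matrix (Fin d) (Fin dff) ℝ)
    (b1 : Fin dff → ℝ) (b2 : Fin d → ℝ)
    (X : Matrix (Fin d) (Fin n) ℝ) : Matrix (Fin d) (Fin n) ℝ :=
  Matrix.of fun i l => mlp W1 W2 b1 b2
    ((∑ k, headAtt (WQ k) (WK k) (WV k) (WO k) (fun r => X r l) X) + fun r => X r l) i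

/-- Euclidean norm of a real vector. -/
noncomputable def eucNorm {n : ℕ} (v : Fin n → ℝ) : ℝ :=
  Real.sqrt (∑ i, v i ^ 2)

/-- Spectral (ℓ²-operator) norm of a real matrix. -/
noncomputable def specNorm {a b : ℕ} (W : Matrix (Fin a) (Fin b) ℝ) : ℝ :=
  sSup {c : ℝ | ∃ x : Fin b → ℝ, eucNorm x ≤ 1 ∧ c = eucNorm (W.mulVec x)}

/-- Horizontal concatenation `[A, B]` of two matrices with `d` rows. -/
def hcat {d m₁ m₂ : ℕ} (A : Matrix (Fin d) (Fin m₁) ℝ) (B : Matrix (Fin d) (Fin m₂) ℝ) :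
    Matrix (Fin d) (Fin (m₁ + m₂)) ℝ :=
  Matrix.of fun i => Fin.append (A i) (B i)

/-- The `d × 2` matrix `[u, v]` with columns `u` and `v`. -/
def two {d : ℕ} (u v : Fin d → ℝ) : Matrix (Fin d) (Fin 2) ℝ :=
  Matrix.of fun i => ![u i, v i]

lemma eucNorm_eq {n : ℕ} (v : Fin n → ℝ) :
    eucNorm v = ‖(WithLp.equiv 2 (Fin n → ℝ)).symm v‖ := by
  simp [eucNorm, EuclideanSpace.norm_eq, sq_abs]

lemma dot_eq {n : ℕ} (u v : Fin n → ℝ) :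
    dotProduct u v =
      inner ℝ ((WithLp.equiv 2 (Fin n → ℝ)).symm u) ((WithLp.equiv 2 (Fin n → ℝ)).symm v) := by
  simp [dotProduct, PiLp.inner_apply, RCLike.inner_apply, mul_comm]

lemma eucNorm_nonneg {n : ℕ} (v : Fin n → ℝ) : 0 ≤ eucNorm v := Real.sqrt_nonneg _

lemma eucNorm_pos {n : ℕ} {v : Fin n → ℝ} (hv : v ≠ 0) : 0 < eucNorm v := by
  rw [eucNorm_eq]
  rw [norm_pos_iff]
  intro h
  exact hv (by simpa using congrArg (WithLp.equiv 2 (Fin n → ℝ)) h)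

lemma eucNorm_triangle {n : ℕ} (a b : Fin n → ℝ) :
    eucNorm (a + b) ≤ eucNorm a + eucNorm b := by
  rw [eucNorm_eq, eucNorm_eq, eucNorm_eq]
  exact norm_add_le _ _

lemma eucNorm_smul {n : ℕ} (c : ℝ) (v : Fin n → ℝ) :
    eucNorm (c • v) = |c| * eucNorm v := by
  simp only [eucNorm, Pi.smul_apply, smul_eq_mul, mul_pow, ← Finset.mul_sum]
  rw [Real.sqrt_mul (sq_nonneg c), Real.sqrt_sq_eq_abs]

lemma abs_dot_le {n : ℕ} (u v : Fin n → ℝ) :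
    |dotProduct u v| ≤ eucNorm u * eucNorm v := by
  rw [dot_eq, eucNorm_eq, eucNorm_eq]
  exact abs_real_inner_le_norm _ _

lemma dot_self_eq {n : ℕ} (v : Fin n → ℝ) :
    dotProduct v v = eucNorm v ^ 2 := by
  rw [eucNorm, Real.sq_sqrt (Finset.sum_nonneg fun i _ => sq_nonneg _)]
  simp [dotProduct, sq]

lemma specNorm_bddAbove {a b : ℕ} (W : Matrix (Fin a) (Fin b) ℝ) :
    BddAbove {c : ℝ | ∃ x : Fin b → ℝ, eucNorm x ≤ 1 ∧ c = eucNorm (W.mulVec x)} := by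
  refine ⟨Real.sqrt (∑ i, ∑ j, W i j ^ 2), ?_⟩
  rintro c ⟨x, hx, rfl⟩
  have hx2 : ∑ j, x j ^ 2 ≤ 1 := by
    have hnn : 0 ≤ ∑ j, x j ^ 2 := Finset.sum_nonneg fun i _ => sq_nonneg _
    have hs : Real.sqrt (∑ j, x j ^ 2) ≤ 1 := hx
    nlinarith [Real.sq_sqrt hnn, Real.sqrt_nonneg (∑ j : Fin b, x j ^ 2)]
  refine Real.sqrt_le_sqrt (Finset.sum_le_sum fun i _ => ?_)
  calc (W.mulVec x i) ^ 2 = (∑ j, W i j * x j) ^ 2 := by rfl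
    _ ≤ (∑ j, W i j ^ 2) * (∑ j, x j ^ 2) := Finset.sum_mul_sq_le_sq_mul_sq _ _ _
    _ ≤ (∑ j, W i j ^ 2) * 1 := by
        refine mul_le_mul_of_nonneg_left hx2 (Finset.sum_nonneg fun j _ => sq_nonneg _)
    _ = ∑ j, W i j ^ 2 := mul_one _

lemma specNorm_nonneg {a b : ℕ} (W : Matrix (Fin a) (Fin b) ℝ) : 0 ≤ specNorm W := by
  refine le_csSup (specNorm_bddAbove W) ⟨0, ?_, ?_⟩
  · simp [eucNorm]
  · simp [eucNorm, Matrix.mulVec_zero]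

lemma eucNorm_eq_zero {n : ℕ} {v : Fin n → ℝ} (h : eucNorm v = 0) : v = 0 := by
  rw [eucNorm_eq, norm_eq_zero] at h
  simpa using congrArg (WithLp.equiv 2 (Fin n → ℝ)) h

lemma eucNorm_mulVec_le {a b : ℕ} (W : Matrix (Fin a) (Fin b) ℝ) (x : Fin b → ℝ) :
    eucNorm (W.mulVec x) ≤ specNorm W * eucNorm x := by
  rcases eq_or_ne (eucNorm x) 0 with h0 | h0
  · rw [eucNorm_eq_zero h0, Matrix.mulVec_zero]
    simp [eucNorm]
  have hpos : 0 < eucNorm x := lt_of_le_of_ne (eucNorm_nonneg x) (Ne.symm h0)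
  set u : Fin b → ℝ := (eucNorm x)⁻¹ • x with hu
  have hun : eucNorm u = 1 := by
    rw [hu, eucNorm_smul, abs_of_nonneg (inv_nonneg.mpr hpos.le), inv_mul_cancel₀ h0]
  have hmem : eucNorm (W.mulVec u) ∈
      {c : ℝ | ∃ x : Fin b → ℝ, eucNorm x ≤ 1 ∧ c = eucNorm (W.mulVec x)} :=
    ⟨u, le_of_eq hun, rfl⟩
  have hle : eucNorm (W.mulVec u) ≤ specNorm W := le_csSup (specNorm_bddAbove W) hmem
  have hxu : x = eucNorm x • u := by
    rw [hu, smul_smul, mul_inv_cancel₀ h0, one_smul]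
  calc eucNorm (W.mulVec x) = eucNorm (W.mulVec (eucNorm x • u)) := by rw [← hxu]
    _ = |eucNorm x| * eucNorm (W.mulVec u) := by rw [Matrix.mulVec_smul, eucNorm_smul]
    _ ≤ eucNorm x * specNorm W := by
        rw [abs_of_nonneg hpos.le]
        exact mul_le_mul_of_nonneg_left hle hpos.le
    _ = specNorm W * eucNorm x := mul_comm _ _

lemma eucNorm_relu_sub {n : ℕ} (u v : Fin n → ℝ) :
    eucNorm ((fun i => max (u i) 0) - fun i => max (v i) 0) ≤ eucNorm (u - v) := by
  refine Real.sqrt_le_sqrt (Finset.sum_le_sum fun i _ => ?_)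
  have h := abs_max_sub_max_le_abs (u i) (v i) 0
  have h2 : |((fun i => max (u i) 0) - fun i => max (v i) 0) i| ≤ |(u - v) i| := by
    simpa using h
  calc ((fun i => max (u i) 0) - fun i => max (v i) 0) i ^ 2
      = |((fun i => max (u i) 0) - fun i => max (v i) 0) i| ^ 2 := (sq_abs _).symm
    _ ≤ |(u - v) i| ^ 2 := by
        exact pow_le_pow_left₀ (abs_nonneg _) h2 2
    _ = (u - v) i ^ 2 := sq_abs _

lemma mlp_lower {d dff : ℕ} (W1 : Matrix (Fin dff) (Fin d) ℝ)
    (W2 : Matrix (Fin d) (Fin dff) ℝ) (b1 : Fin dff → ℝ) (b2 : Fin d → ℝ)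
    (u v : Fin d → ℝ) :
    (1 - specNorm W1 * specNorm W2) * eucNorm (u - v) ≤
      eucNorm (mlp W1 W2 b1 b2 u - mlp W1 W2 b1 b2 v) := by
  set ru : Fin dff → ℝ := fun i => max (W1.mulVec u i + b1 i) 0 with hru
  set rv : Fin dff → ℝ := fun i => max (W1.mulVec v i + b1 i) 0 with hrv
  have hdecomp : mlp W1 W2 b1 b2 u - mlp W1 W2 b1 b2 v
      = W2.mulVec (ru - rv) + (u - v) := by
    funext i
    simp [mlp, Matrix.mulVec_sub, hru, hrv]
    ring
  have htri : eucNorm (u - v) ≤ eucNorm (mlp W1 W2 b1 b2 u - mlp W1 W2 b1 b2 v)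
      + eucNorm (W2.mulVec (ru - rv)) := by
    have h1 : eucNorm (mlp W1 W2 b1 b2 u - mlp W1 W2 b1 b2 v + (-(W2.mulVec (ru - rv))))
        ≤ eucNorm (mlp W1 W2 b1 b2 u - mlp W1 W2 b1 b2 v) + eucNorm (-(W2.mulVec (ru - rv))) :=
      eucNorm_triangle _ _
    have h2 : mlp W1 W2 b1 b2 u - mlp W1 W2 b1 b2 v + (-(W2.mulVec (ru - rv))) = u - v := by
      rw [hdecomp]; abel
    have h3 : eucNorm (-(W2.mulVec (ru - rv))) = eucNorm (W2.mulVec (ru - rv)) := by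
      have : (-(W2.mulVec (ru - rv))) = (-1 : ℝ) • (W2.mulVec (ru - rv)) := by
        funext i; simp
      rw [this, eucNorm_smul]; simp
    rw [h2, h3] at h1
    exact h1
  have hW2 : eucNorm (W2.mulVec (ru - rv)) ≤ specNorm W2 * eucNorm (ru - rv) :=
    eucNorm_mulVec_le _ _
  have hrelu : eucNorm (ru - rv) ≤ eucNorm (W1.mulVec (u - v)) := by
    have h := eucNorm_relu_sub (fun i => W1.mulVec u i + b1 i) (fun i => W1.mulVec v i + b1 i)
    have harg : ((fun i => W1.mulVec u i + b1 i) - fun i => W1.mulVec v i + b1 i)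
        = W1.mulVec (u - v) := by
      funext i; simp [Matrix.mulVec_sub]
    rw [harg] at h
    exact h
  have hW1 : eucNorm (W1.mulVec (u - v)) ≤ specNorm W1 * eucNorm (u - v) :=
    eucNorm_mulVec_le _ _
  have hs2 : 0 ≤ specNorm W2 := specNorm_nonneg _
  nlinarith [eucNorm_nonneg (u - v), mul_le_mul_of_nonneg_left hrelu hs2,
    mul_le_mul_of_nonneg_left hW1 hs2]

lemma dot_headAtt {s s' d m : ℕ}
    (WQ WK : Matrix (Fin s) (Fin d) ℝ) (WV : Matrix (Fin s') (Fin d) ℝ)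
    (WO : Matrix (Fin d) (Fin s') ℝ)
    (yv x0 : Fin d → ℝ) (X : Matrix (Fin d) (Fin m) ℝ) :
    dotProduct yv (headAtt WQ WK WV WO x0 X) =
      (∑ j, Real.exp (dotProduct (WK.mulVec fun i => X i j) (WQ.mulVec x0)) *
          dotProduct yv (WO.mulVec (WV.mulVec fun i => X i j))) /
      (∑ j, Real.exp (dotProduct (WK.mulVec fun i => X i j) (WQ.mulVec x0))) := by
  rw [headAtt]
  have hlin : ∀ (c : Fin m → ℝ) (v : Fin m → Fin d → ℝ),
      dotProduct yv (∑ j, c j • v j) = ∑ j, c j * dotProduct yv (v j) := by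
    intro c v
    simp only [dotProduct, Finset.sum_apply, Pi.smul_apply, smul_eq_mul,
      Finset.mul_sum]
    rw [Finset.sum_comm]
    exact Finset.sum_congr rfl fun j _ => Finset.sum_congr rfl fun i _ => by ring
  rw [hlin]
  rw [Finset.sum_div]
  refine Finset.sum_congr rfl fun j _ => ?_
  simp only [softmax]
  ring

lemma dot_headAtt_prompt {s s' d mp : ℕ}
    (WQ WK : Matrix (Fin s) (Fin d) ℝ) (WV : Matrix (Fin s') (Fin d) ℝ)
    (WO : Matrix (Fin d) (Fin s') ℝ) (yv x0 u : Fin d → ℝ)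
    (P : Matrix (Fin d) (Fin mp) ℝ)
    (horth : dotProduct yv (headAtt WQ WK WV WO x0 (two u x0)) = 0) :
    dotProduct yv (headAtt WQ WK WV WO x0 (hcat P (two u x0))) =
      (∑ j : Fin mp, Real.exp (dotProduct (WK.mulVec fun rr => P rr j) (WQ.mulVec x0)) *
          dotProduct yv (WO.mulVec (WV.mulVec fun rr => P rr j))) /
      ((∑ j : Fin mp, Real.exp (dotProduct (WK.mulVec fun rr => P rr j) (WQ.mulVec x0))) +
        (Real.exp (dotProduct (WK.mulVec u) (WQ.mulVec x0)) +
         Real.exp (dotProduct (WK.mulVec x0) (WQ.mulVec x0)))) := by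
  have t0 : (fun i => two u x0 i (0 : Fin 2)) = u := by funext rr; simp [two]
  have t1 : (fun i => two u x0 i (1 : Fin 2)) = x0 := by funext rr; simp [two]
  rw [dot_headAtt] at horth
  simp only [Fin.sum_univ_two] at horth
  rw [t0, t1] at horth
  have hden : 0 < Real.exp (dotProduct (WK.mulVec u) (WQ.mulVec x0)) +
      Real.exp (dotProduct (WK.mulVec x0) (WQ.mulVec x0)) :=
    add_pos (Real.exp_pos _) (Real.exp_pos _)
  have hnum0 : Real.exp (dotProduct (WK.mulVec u) (WQ.mulVec x0)) *
        dotProduct yv (WO.mulVec (WV.mulVec u)) +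
      Real.exp (dotProduct (WK.mulVec x0) (WQ.mulVec x0)) *
        dotProduct yv (WO.mulVec (WV.mulVec x0)) = 0 :=
    (div_eq_zero_iff.mp horth).resolve_right hden.ne'
  rw [dot_headAtt]
  have e1 : ∀ j : Fin mp,
      (fun i => hcat P (two u x0) i (Fin.castAdd 2 j)) = fun rr => P rr j := by
    intro j; funext rr; simp [hcat, Fin.append_left]
  have e2 : (fun i => hcat P (two u x0) i (Fin.natAdd mp (0 : Fin 2))) = u := by
    funext rr; simp [hcat, Fin.append_right, two]
  have e3 : (fun i => hcat P (two u x0) i (Fin.natAdd mp (1 : Fin 2))) = x0 := by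
    funext rr; simp [hcat, Fin.append_right, two]
  simp only [Fin.sum_univ_add, Fin.sum_univ_two, e1, e2, e3]
  congr 1
  linarith [hnum0]

/-- The paper's Theorem 5 (precise form): a one-layer single-head transformer whose MLP
satisfies `c = ‖W₁‖₂ ‖W₂‖₂ < 1` cannot, via any pre-prompt, approximate both targets
`yᵢ = MLP(y'ᵢ + x₀)` (with `y'₁, y'₂` nonzero, mutually orthogonal, and orthogonal to
`aᵢ = Att(x₀, [xᵢ, x₀])`) to accuracy better than `(1 - c) · min(‖y'₁‖, ‖y'₂‖) / 2`. -/
theorem one_layer_prompt_tuning_cannot_approximate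
    {s s' d dff : ℕ} (hd : 0 < d)
    (WQ WK : Matrix (Fin s) (Fin d) ℝ)
    (WV : Matrix (Fin s') (Fin d) ℝ) (WO : Matrix (Fin d) (Fin s') ℝ)
    (W1 : Matrix (Fin dff) (Fin d) ℝ) (W2 : Matrix (Fin d) (Fin dff) ℝ)
    (b1 : Fin dff → ℝ) (b2 : Fin d → ℝ)
    (hc : specNorm W1 * specNorm W2 < 1)
    (x0 : Fin d → ℝ) (x : Fin 2 → Fin d → ℝ)
    (a : Fin 2 → Fin d → ℝ)
    (ha : ∀ i, a i = headAtt WQ WK WV WO x0 (two (x i) x0))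
    (y' : Fin 2 → Fin d → ℝ)
    (hy'0 : ∀ i, y' i ≠ 0)
    (hy'y' : dotProduct (y' 0) (y' 1) = 0)
    (hy'a : ∀ i j, dotProduct (y' i) (a j) = 0)
    (y : Fin 2 → Fin d → ℝ)
    (hy : ∀ i, y i = mlp W1 W2 b1 b2 (y' i + x0))
    (r : ℝ) (hr : r = min (eucNorm (y' 0)) (eucNorm (y' 1))) :
    ∀ (mp : ℕ) (P : Matrix (Fin d) (Fin mp) ℝ),
      ∃ i, (1 - specNorm W1 * specNorm W2) * r / 2 ≤
        eucNorm ((fun rr => tf (fun _ : Fin 1 => WQ) (fun _ => WK) (fun _ => WV)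
            (fun _ => WO) W1 W2 b1 b2
            (hcat P (two (x i) x0)) rr (Fin.last (mp + 1))) - y i) := by
  intro mp P
  by_contra hcon
  push_neg at hcon
  set c : ℝ := specNorm W1 * specNorm W2 with hcdef
  have hc0 : 0 ≤ c := mul_nonneg (specNorm_nonneg _) (specNorm_nonneg _)
  have h1c : 0 < 1 - c := by linarith
  set B : Fin 2 → (Fin d → ℝ) :=
    fun i => headAtt WQ WK WV WO x0 (hcat P (two (x i) x0)) with hB
  -- the last column of the prompted context is x0
  have hlastcol : ∀ i : Fin 2,
      (fun rr => hcat P (two (x i) x0) rr (Fin.last (mp + 1))) = x0 := by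
    intro i
    funext rr
    have hidx : (Fin.last (mp + 1) : Fin (mp + 2)) = Fin.natAdd mp (1 : Fin 2) := by
      ext; simp [Fin.natAdd]
    rw [hidx]
    simp [hcat, Fin.append_right, two]
  -- the output of the transformer on the prompted input
  have hout : ∀ i : Fin 2,
      (fun rr => tf (fun _ : Fin 1 => WQ) (fun _ => WK) (fun _ => WV)
          (fun _ => WO) W1 W2 b1 b2 (hcat P (two (x i) x0)) rr (Fin.last (mp + 1)))
        = mlp W1 W2 b1 b2 (B i + x0) := by
    intro i
    funext rr
    simp only [tf, Matrix.of_apply, Fin.sum_univ_one]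
    rw [hlastcol i]
  -- hence the attention outputs are close to the targets y'
  have hbound : ∀ i : Fin 2, eucNorm (B i - y' i) < r / 2 := by
    intro i
    have h1 := hcon i
    rw [hout i, hy i] at h1
    have h2 := mlp_lower W1 W2 b1 b2 (B i + x0) (y' i + x0)
    rw [add_sub_add_right_eq_sub] at h2
    rw [← hcdef] at h2
    nlinarith [lt_of_le_of_lt h2 h1, h1c]
  have hn : ∀ i : Fin 2, 0 < eucNorm (y' i) := fun i => eucNorm_pos (hy'0 i)
  have hrpos : 0 < r := by rw [hr]; exact lt_min (hn 0) (hn 1)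
  have hrle : ∀ i : Fin 2, r ≤ eucNorm (y' i) := by
    intro i
    rw [hr]
    fin_cases i
    · exact min_le_left _ _
    · exact min_le_right _ _
  -- diagonal estimate
  have hdiag : ∀ i : Fin 2,
      eucNorm (y' i) * r / 2 < dotProduct (y' i) (B i) := by
    intro i
    have hsplit : dotProduct (y' i) (B i)
        = dotProduct (y' i) (B i - y' i) + eucNorm (y' i) ^ 2 := by
      rw [← dot_self_eq, dotProduct_sub]; ring
    have habs := abs_dot_le (y' i) (B i - y' i)
    have h1 : -(eucNorm (y' i) * eucNorm (B i - y' i))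
        ≤ dotProduct (y' i) (B i - y' i) := by
      have := neg_abs_le (dotProduct (y' i) (B i - y' i))
      linarith
    have h2 : eucNorm (y' i) * eucNorm (B i - y' i) < eucNorm (y' i) * (r / 2) :=
      mul_lt_mul_of_pos_left (hbound i) (hn i)
    have h3 : eucNorm (y' i) * r ≤ eucNorm (y' i) ^ 2 := by
      nlinarith [hrle i, hn i]
    rw [hsplit]
    nlinarith
  -- cross estimates
  have hcross : ∀ i k : Fin 2, dotProduct (y' k) (y' i) = 0 →
      dotProduct (y' k) (B i) < eucNorm (y' k) * r / 2 := by
    intro i k hor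
    have hsplit : dotProduct (y' k) (B i)
        = dotProduct (y' k) (B i - y' i) := by
      rw [dotProduct_sub, hor]; ring
    have habs := abs_dot_le (y' k) (B i - y' i)
    have h1 := le_abs_self (dotProduct (y' k) (B i - y' i))
    have h2 : eucNorm (y' k) * eucNorm (B i - y' i) < eucNorm (y' k) * (r / 2) :=
      mul_lt_mul_of_pos_left (hbound i) (hn k)
    rw [hsplit]
    nlinarith
  -- key formula: the dot products through the prompted attention
  have hkey : ∀ k i : Fin 2, dotProduct (y' k) (B i) =
      (∑ j : Fin mp, Real.exp (dotProduct (WK.mulVec fun rr => P rr j) (WQ.mulVec x0)) *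
          dotProduct (y' k) (WO.mulVec (WV.mulVec fun rr => P rr j))) /
      ((∑ j : Fin mp, Real.exp (dotProduct (WK.mulVec fun rr => P rr j) (WQ.mulVec x0))) +
        (Real.exp (dotProduct (WK.mulVec (x i)) (WQ.mulVec x0)) +
         Real.exp (dotProduct (WK.mulVec x0) (WQ.mulVec x0)))) := by
    intro k i
    simp only [hB]
    exact dot_headAtt_prompt WQ WK WV WO (y' k) x0 (x i) P (by rw [← ha i]; exact hy'a k i)
  set Np : Fin 2 → ℝ := fun k =>
    ∑ j : Fin mp, Real.exp (dotProduct (WK.mulVec fun rr => P rr j) (WQ.mulVec x0)) *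
      dotProduct (y' k) (WO.mulVec (WV.mulVec fun rr => P rr j)) with hNp
  set D : Fin 2 → ℝ := fun i =>
    (∑ j : Fin mp, Real.exp (dotProduct (WK.mulVec fun rr => P rr j) (WQ.mulVec x0))) +
      (Real.exp (dotProduct (WK.mulVec (x i)) (WQ.mulVec x0)) +
       Real.exp (dotProduct (WK.mulVec x0) (WQ.mulVec x0))) with hD
  have hDpos : ∀ i : Fin 2, 0 < D i := by
    intro i
    have h0 : 0 ≤ ∑ j : Fin mp,
        Real.exp (dotProduct (WK.mulVec fun rr => P rr j) (WQ.mulVec x0)) :=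
      Finset.sum_nonneg fun j _ => (Real.exp_pos _).le
    have h1 := Real.exp_pos (dotProduct (WK.mulVec (x i)) (WQ.mulVec x0))
    have h2 := Real.exp_pos (dotProduct (WK.mulVec x0) (WQ.mulVec x0))
    simp only [hD]
    linarith
  have hkey' : ∀ k i : Fin 2, dotProduct (y' k) (B i) = Np k / D i := by
    intro k i
    rw [hkey k i]
  -- assemble the contradiction
  have hQ00 : eucNorm (y' 0) * r / 2 < Np 0 / D 0 := by rw [← hkey' 0 0]; exact hdiag 0
  have hQ11 : eucNorm (y' 1) * r / 2 < Np 1 / D 1 := by rw [← hkey' 1 1]; exact hdiag 1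
  have hQ01 : Np 0 / D 1 < eucNorm (y' 0) * r / 2 := by
    rw [← hkey' 0 1]; exact hcross 1 0 hy'y'
  have hQ10 : Np 1 / D 0 < eucNorm (y' 1) * r / 2 := by
    rw [← hkey' 1 0]
    exact hcross 0 1 (by rw [dotProduct_comm]; exact hy'y')
  have hNp0 : 0 < Np 0 := by
    have h : 0 < Np 0 / D 0 := lt_trans (div_pos (mul_pos (hn 0) hrpos) two_pos) hQ00
    exact (div_pos_iff.mp h).resolve_right (fun ⟨_, h2⟩ => absurd (hDpos 0) (not_lt.mpr h2.le)) |>.1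
  have hNp1 : 0 < Np 1 := by
    have h : 0 < Np 1 / D 1 := lt_trans (div_pos (mul_pos (hn 1) hrpos) two_pos) hQ11
    exact (div_pos_iff.mp h).resolve_right (fun ⟨_, h2⟩ => absurd (hDpos 1) (not_lt.mpr h2.le)) |>.1
  have h01 : Np 0 / D 1 < Np 0 / D 0 := lt_trans hQ01 hQ00
  have h10 : Np 1 / D 0 < Np 1 / D 1 := lt_trans hQ10 hQ11
  have hd01 : Np 0 * D 0 < Np 0 * D 1 := by
    have := (div_lt_div_iff₀ (hDpos 1) (hDpos 0)).mp h01
    linarith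
  have hd10 : Np 1 * D 1 < Np 1 * D 0 := by
    have := (div_lt_div_iff₀ (hDpos 0) (hDpos 1)).mp h10
    linarith
  have hDlt1 : D 0 < D 1 := lt_of_mul_lt_mul_left hd01 hNp0.le
  have hDlt2 : D 1 < D 0 := lt_of_mul_lt_mul_left hd10 hNp1.le
  linarith
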